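/- arXiv:2501.17516 — 3 statements merged into one kernel-verified Lean document; each statement's English description precedes it below -/
import Mathlib

section
/- Formal solution at the irregular singularity (Proposition 2.2): assume each diagonal block A_{11}, …, A_{νν} of A is non-resonant. Then there exists a unique sequence (H_p)_{p≥0} of complex n×n matrices with H_0 = I such that for every integer p ≥ 0: u·H_{p+1} − H_{p+1}·u = H_p·(δ_u A) − A·H_p − p·H_p. (This recursion is exactly the condition that F(z) = (I + Σ_{p≥1} H_p z^{−p})·z^{δ_u A}·e^{uz} is the unique formal fundamental solution of the confluent hypergeometric system at z = ∞.) -/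
/-!
Write `ad_u X = u X - X u` and `R_p X = X (δ_u A) - A X - p X`. Since `ad_u` multiplies the
`(i, j)` block by `u_i - u_j`, it kills block-diagonal matrices and is invertible on off-diagonal
ones. Hence the equation `ad_u H_{p+1} = R_p H_p` fixes the off-diagonal part of `H_{p+1}`, and is
solvable only if `δ_u (R_p H_p) = 0`. Imposing that condition at the next step fixes the
diagonal blocks `X_k` of `H_{p+1}` through `X_k A_kk - A_kk X_k - (p+1) X_k = (known)`, a Sylvester
equation whose homogeneous version has only the trivial solution because `A_kk` and
`A_kk + p + 1` have disjoint spectra (non-resonance). Both requirements are packaged into the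
operator `T_q X = ad_u X + δ_u (R_q X)`, injective for `q ≥ 1` and hence invertible, and
`H_{p+1} = T_{p+1}⁻¹ (R_p H_p)`.
-/

noncomputable section

/-- A square complex matrix is non-resonant if the difference of any two of its
eigenvalues is never a nonzero integer. -/
def NonResonant {m : Type*} [Fintype m] [DecidableEq m] (M : Matrix m m ℂ) : Prop :=
  ∀ a ∈ spectrum ℂ M, ∀ b ∈ spectrum ℂ M, ∀ k : ℤ, a - b = (k : ℂ) → k = 0

/-- The `k`-th diagonal block `A_{kk}` of a `ν×ν`-blocked matrix. -/
def diagBlock {ν : ℕ} {n : Fin ν → ℕ}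
    (A : Matrix (Σ k : Fin ν, Fin (n k)) (Σ k : Fin ν, Fin (n k)) ℂ) (k : Fin ν) :
    Matrix (Fin (n k)) (Fin (n k)) ℂ :=
  Matrix.of fun a b => A ⟨k, a⟩ ⟨k, b⟩

/-- The block-diagonal part `δ_u A = diag(A_{11}, …, A_{νν})`. -/
def blockDiagPart {ν : ℕ} {n : Fin ν → ℕ}
    (A : Matrix (Σ k : Fin ν, Fin (n k)) (Σ k : Fin ν, Fin (n k)) ℂ) :
    Matrix (Σ k : Fin ν, Fin (n k)) (Σ k : Fin ν, Fin (n k)) ℂ :=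
  Matrix.of fun i j => if i.1 = j.1 then A i j else 0

/-- The diagonal matrix `u = diag(u_1 I_{n_1}, …, u_ν I_{n_ν})`. -/
def uDiag {ν : ℕ} (n : Fin ν → ℕ) (c : Fin ν → ℂ) :
    Matrix (Σ k : Fin ν, Fin (n k)) (Σ k : Fin ν, Fin (n k)) ℂ :=
  Matrix.diagonal fun i => c i.1

open Matrix Polynomial

theorem SemiconjBy.mul_aeval {R A : Type*} [CommSemiring R] [Semiring A] [Algebra R A]
    {x a b : A} (h : SemiconjBy x a b) (p : R[X]) : x * aeval a p = aeval b p * x := by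
  induction p using Polynomial.induction_on' with
  | add p q hp hq => simp only [map_add, mul_add, add_mul, hp, hq]
  | monomial k r =>
    simp only [aeval_monomial, ← mul_assoc, Algebra.commutes, (h.pow_right k).eq]
    rw [mul_assoc, ← Algebra.commutes, ← mul_assoc]

theorem Matrix.eq_zero_of_semiconjBy_of_disjoint_spectrum {𝕜 m : Type*} [Field 𝕜]
    [IsAlgClosed 𝕜] [Fintype m] [DecidableEq m] {X B C : Matrix m m 𝕜} (h : SemiconjBy X B C)
    (hBC : Disjoint (spectrum 𝕜 B) (spectrum 𝕜 C)) : X = 0 := by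
  cases isEmpty_or_nonempty m
  · exact Subsingleton.elim _ _
  have hunit : IsUnit (aeval B C.charpoly) := by
    by_contra hu
    have hdeg : 0 < C.charpoly.degree := by
      rw [charpoly_degree_eq_dim]; exact_mod_cast Fintype.card_pos
    rw [← spectrum.zero_mem_iff 𝕜, spectrum.map_polynomial_aeval_of_degree_pos B _ hdeg] at hu
    obtain ⟨z, hzB, hzC⟩ := hu
    exact hBC.ne_of_mem hzB (mem_spectrum_of_isRoot_charpoly hzC) rfl
  rw [← hunit.mul_left_eq_zero, h.mul_aeval, aeval_self_charpoly, zero_mul]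

theorem NonResonant.eq_zero_of_mul_sub_mul_sub_smul_eq_zero {m : Type*} [Fintype m]
    [DecidableEq m] {B X : Matrix m m ℂ} (hB : NonResonant B) {q : ℤ} (hq : q ≠ 0)
    (h : X * B - B * X - (q : ℂ) • X = 0) : X = 0 := by
  refine eq_zero_of_semiconjBy_of_disjoint_spectrum (B := B) (C := algebraMap ℂ _ q + B) ?_ ?_
  · rw [SemiconjBy, add_mul, Algebra.algebraMap_eq_smul_one, smul_one_mul, ← sub_eq_zero, ← h]
    abel
  · rw [← spectrum.singleton_add_eq, Set.disjoint_left]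
    rintro z hzB ⟨_, rfl, b, hb, rfl⟩
    exact hq (hB _ hzB b hb q (by simp))

section BlockRecursion

variable {ν : ℕ} {n : Fin ν → ℕ}

local notation "Mat" => Matrix (Σ k : Fin ν, Fin (n k)) (Σ k : Fin ν, Fin (n k)) ℂ

theorem diagBlock_eq_blockDiag' (X : Mat) : diagBlock X = blockDiag' X := rfl

theorem blockDiagPart_eq_blockDiagonal' (X : Mat) :
    blockDiagPart X = blockDiagonal' (diagBlock X) := by
  ext ⟨k, a⟩ ⟨l, b⟩
  by_cases hkl : k = l
  · subst hkl; simp [blockDiagPart, diagBlock]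
  · simp [blockDiagPart, blockDiagonal'_apply_ne _ _ _ hkl, hkl]

theorem blockDiagPart_eq_zero_iff {X : Mat} :
    blockDiagPart X = 0 ↔ ∀ k, diagBlock X k = 0 := by
  rw [blockDiagPart_eq_blockDiagonal', ← blockDiagonal'_zero, blockDiagonal'_inj, funext_iff]
  rfl

theorem blockDiagPart_blockDiagPart (X : Mat) :
    blockDiagPart (blockDiagPart X) = blockDiagPart X := by
  rw [blockDiagPart_eq_blockDiagonal' (blockDiagPart X), blockDiagPart_eq_blockDiagonal',
    diagBlock_eq_blockDiag', blockDiag'_blockDiagonal']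

theorem diagBlock_mul_blockDiagPart (X Y : Mat) (k : Fin ν) :
    diagBlock (X * blockDiagPart Y) k = diagBlock X k * diagBlock Y k := by
  ext a b
  simp only [diagBlock, blockDiagPart, of_apply, mul_apply, Fintype.sum_sigma]
  rw [Finset.sum_eq_single k (fun l _ hl => by simp [hl]) (by simp)]
  simp

theorem blockDiagPart_add (X Y : Mat) :
    blockDiagPart (X + Y) = blockDiagPart X + blockDiagPart Y := by
  simp only [blockDiagPart_eq_blockDiagonal', diagBlock_eq_blockDiag', blockDiag'_add,
    blockDiagonal'_add]

theorem blockDiagPart_smul (r : ℂ) (X : Mat) :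
    blockDiagPart (r • X) = r • blockDiagPart X := by
  simp only [blockDiagPart_eq_blockDiagonal', diagBlock_eq_blockDiag', blockDiag'_smul,
    blockDiagonal'_smul]

def blockDiagPartₗ : Mat →ₗ[ℂ] Mat where
  toFun := blockDiagPart
  map_add' := blockDiagPart_add
  map_smul' := blockDiagPart_smul

theorem uDiag_mul_sub_mul_uDiag_apply (c : Fin ν → ℂ) (X : Mat) (i j) :
    (uDiag n c * X - X * uDiag n c) i j = (c i.1 - c j.1) * X i j := by
  simp only [uDiag, Matrix.sub_apply, diagonal_mul, mul_diagonal]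
  ring

theorem blockDiagPart_uDiag_mul_sub_mul_uDiag (c : Fin ν → ℂ) (X : Mat) :
    blockDiagPart (uDiag n c * X - X * uDiag n c) = 0 := by
  ext i j
  simp only [blockDiagPart, of_apply, uDiag_mul_sub_mul_uDiag_apply]
  split_ifs with h <;> simp [h]

theorem blockDiagPart_eq_self_of_uDiag_mul_sub_mul_uDiag {c : Fin ν → ℂ}
    (hc : Function.Injective c) {X : Mat} (hX : uDiag n c * X - X * uDiag n c = 0) :
    blockDiagPart X = X := by
  ext i j
  have hij := congrFun₂ hX i j
  rw [uDiag_mul_sub_mul_uDiag_apply, Matrix.zero_apply, mul_eq_zero, sub_eq_zero] at hij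
  by_cases h : i.1 = j.1
  · simp [blockDiagPart, h]
  · simp [blockDiagPart, h, hij.resolve_left (hc.ne h)]

def recursionRhs (A : Mat) (p : ℕ) : Mat →ₗ[ℂ] Mat :=
  LinearMap.mulRight ℂ (blockDiagPart A) - LinearMap.mulLeft ℂ A - (p : ℂ) • LinearMap.id

@[simp]
theorem recursionRhs_apply (A : Mat) (p : ℕ) (X : Mat) :
    recursionRhs A p X = X * blockDiagPart A - A * X - (p : ℂ) • X := rfl

theorem diagBlock_recursionRhs_of_blockDiagPart_eq_self (A : Mat) (p : ℕ) {X : Mat}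
    (hX : blockDiagPart X = X) (k : Fin ν) :
    diagBlock (recursionRhs A p X) k
      = diagBlock X k * diagBlock A k - diagBlock A k * diagBlock X k
          - (p : ℂ) • diagBlock X k := by
  have hAX := diagBlock_mul_blockDiagPart A X k
  rw [hX] at hAX
  rw [recursionRhs_apply, diagBlock_eq_blockDiag', blockDiag'_sub, blockDiag'_sub,
    blockDiag'_smul, Pi.sub_apply, Pi.sub_apply, Pi.smul_apply]
  simp only [← diagBlock_eq_blockDiag', diagBlock_mul_blockDiagPart, hAX]

def recursionOp (c : Fin ν → ℂ) (A : Mat) (q : ℕ) : Mat →ₗ[ℂ] Mat :=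
  LinearMap.mulLeft ℂ (uDiag n c) - LinearMap.mulRight ℂ (uDiag n c)
    + blockDiagPartₗ ∘ₗ recursionRhs A q

theorem recursionOp_apply (c : Fin ν → ℂ) (A : Mat) (q : ℕ) (X : Mat) :
    recursionOp c A q X
      = uDiag n c * X - X * uDiag n c + blockDiagPart (recursionRhs A q X) := rfl

theorem blockDiagPart_recursionOp (c : Fin ν → ℂ) (A : Mat) (q : ℕ) (X : Mat) :
    blockDiagPart (recursionOp c A q X) = blockDiagPart (recursionRhs A q X) := by
  rw [recursionOp_apply, blockDiagPart_add, blockDiagPart_uDiag_mul_sub_mul_uDiag,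
    blockDiagPart_blockDiagPart, zero_add]

theorem recursionOp_injective {c : Fin ν → ℂ} (hc : Function.Injective c) {A : Mat}
    (hA : ∀ k, NonResonant (diagBlock A k)) {q : ℕ} (hq : q ≠ 0) :
    Function.Injective (recursionOp c A q) := by
  rw [← LinearMap.ker_eq_bot, LinearMap.ker_eq_bot']
  intro X hX
  have hR : blockDiagPart (recursionRhs A q X) = 0 := by
    rw [← blockDiagPart_recursionOp c, hX, blockDiagPart_eq_zero_iff]
    exact fun k => rfl
  have hXdiag : blockDiagPart X = X := by
    refine blockDiagPart_eq_self_of_uDiag_mul_sub_mul_uDiag hc ?_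
    rwa [recursionOp_apply, hR, add_zero] at hX
  rw [← hXdiag, blockDiagPart_eq_zero_iff]
  intro k
  refine (hA k).eq_zero_of_mul_sub_mul_sub_smul_eq_zero (q := q) (by exact_mod_cast hq) ?_
  rw [Int.cast_natCast, ← diagBlock_recursionRhs_of_blockDiagPart_eq_self A q hXdiag]
  exact blockDiagPart_eq_zero_iff.mp hR k

theorem recursionOp_eq_of_blockDiagPart_recursionRhs_eq_zero (c : Fin ν → ℂ) {A : Mat}
    {q : ℕ} {X : Mat} (hX : blockDiagPart (recursionRhs A q X) = 0) :
    recursionOp c A q X = uDiag n c * X - X * uDiag n c := by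
  rw [recursionOp_apply, hX, add_zero]

def formalSolutionCoeff {c : Fin ν → ℂ} (hc : Function.Injective c) {A : Mat}
    (hA : ∀ k, NonResonant (diagBlock A k)) : ℕ → Mat
  | 0 => 1
  | p + 1 => (LinearEquiv.ofInjectiveEndo (recursionOp c A (p + 1))
      (recursionOp_injective hc hA p.succ_ne_zero)).symm
        (recursionRhs A p (formalSolutionCoeff hc hA p))

variable {c : Fin ν → ℂ} (hc : Function.Injective c)
  {A : Matrix (Σ k : Fin ν, Fin (n k)) (Σ k : Fin ν, Fin (n k)) ℂ}
  (hA : ∀ k, NonResonant (diagBlock A k))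

theorem recursionOp_formalSolutionCoeff_succ (p : ℕ) :
    recursionOp c A (p + 1) (formalSolutionCoeff hc hA (p + 1))
      = recursionRhs A p (formalSolutionCoeff hc hA p) :=
  (LinearEquiv.ofInjectiveEndo _ (recursionOp_injective hc hA p.succ_ne_zero)).apply_symm_apply _

theorem blockDiagPart_recursionRhs_formalSolutionCoeff (p : ℕ) :
    blockDiagPart (recursionRhs A p (formalSolutionCoeff hc hA p)) = 0 := by
  induction p with
  | zero =>
    rw [blockDiagPart_eq_zero_iff]
    intro k
    simp [formalSolutionCoeff, diagBlock_eq_blockDiag', blockDiagPart_eq_blockDiagonal']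
  | succ p ih =>
    rw [← blockDiagPart_recursionOp c, recursionOp_formalSolutionCoeff_succ, ih]

theorem uDiag_mul_sub_mul_uDiag_formalSolutionCoeff_succ (p : ℕ) :
    uDiag n c * formalSolutionCoeff hc hA (p + 1)
        - formalSolutionCoeff hc hA (p + 1) * uDiag n c
      = recursionRhs A p (formalSolutionCoeff hc hA p) := by
  rw [← recursionOp_eq_of_blockDiagPart_recursionRhs_eq_zero c
    (blockDiagPart_recursionRhs_formalSolutionCoeff hc hA (p + 1)),
    recursionOp_formalSolutionCoeff_succ]

theorem eq_formalSolutionCoeff {G : ℕ → Mat} (hG0 : G 0 = 1)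
    (hG : ∀ p, uDiag n c * G (p + 1) - G (p + 1) * uDiag n c = recursionRhs A p (G p)) :
    G = formalSolutionCoeff hc hA := by
  funext p
  induction p with
  | zero => exact hG0
  | succ p ih =>
    have hGdiag : blockDiagPart (recursionRhs A (p + 1) (G (p + 1))) = 0 := by
      rw [← hG (p + 1), blockDiagPart_uDiag_mul_sub_mul_uDiag]
    apply recursionOp_injective hc hA p.succ_ne_zero
    rw [recursionOp_eq_of_blockDiagPart_recursionRhs_eq_zero c hGdiag, hG p, ih,
      recursionOp_formalSolutionCoeff_succ]

end BlockRecursion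

theorem formal_fundamental_solution_at_infinity_general
    (ν : ℕ) (n : Fin ν → ℕ) (c : Fin ν → ℂ) (hc : Function.Injective c)
    (A : Matrix (Σ k : Fin ν, Fin (n k)) (Σ k : Fin ν, Fin (n k)) ℂ)
    (hA : ∀ k : Fin ν, NonResonant (diagBlock A k)) :
    ∃! H : ℕ → Matrix (Σ k : Fin ν, Fin (n k)) (Σ k : Fin ν, Fin (n k)) ℂ,
      H 0 = 1 ∧
      ∀ p : ℕ,
        uDiag n c * H (p + 1) - H (p + 1) * uDiag n c
          = H p * blockDiagPart A - A * H p - (p : ℂ) • H p :=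
  ⟨formalSolutionCoeff hc hA, ⟨rfl, uDiag_mul_sub_mul_uDiag_formalSolutionCoeff_succ hc hA⟩,
    fun _ hG => eq_formalSolutionCoeff hc hA hG.1 hG.2⟩

/-- **Proposition 2.2.** If every diagonal block `A_{kk}` is
non-resonant then there is a unique sequence `(H_p)` with `H_0 = I` and
`u·H_{p+1} − H_{p+1}·u = H_p·(δ_u A) − A·H_p − p·H_p` for all `p ≥ 0`;
these are the coefficients of the unique formal fundamental solution
`F(z) = (I + Σ_{p≥1} H_p z^{−p})·z^{δ_u A}·e^{uz}` at `z = ∞`. -/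
theorem formal_fundamental_solution_at_infinity
    (ν : ℕ) (hν : 1 ≤ ν) (n : Fin ν → ℕ) (c : Fin ν → ℂ) (hc : Function.Injective c)
    (A : Matrix (Σ k : Fin ν, Fin (n k)) (Σ k : Fin ν, Fin (n k)) ℂ)
    (hA : ∀ k : Fin ν, NonResonant (diagBlock A k)) :
    ∃! H : ℕ → Matrix (Σ k : Fin ν, Fin (n k)) (Σ k : Fin ν, Fin (n k)) ℂ,
      H 0 = 1 ∧
      ∀ p : ℕ,
        uDiag n c * H (p + 1) - H (p + 1) * uDiag n c
          = H p * blockDiagPart A - A * H p - (p : ℂ) • H p :=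
  formal_fundamental_solution_at_infinity_general ν n c hc A hA

end
end

section
/- The analytic Laplace transform computes the formal Laplace transform (Lemma 2.10, in the regime where all exponents have positive real part): let u_0 ∈ ℂ, d ∈ ℝ, s ∈ ℂ with Re s < 0, and let (a_p)_{p≥0} be complex numbers such that the power series Σ_{p≥0} a_p·Γ(p−s)·w^p has radius of convergence at least r for some r > 0. Then for every ξ ∈ ℂ with Re((ξ − u_0)·e^{id}) > 1/r: (i) the series f(t) := Σ_{p≥0} a_p·t^{p−s}·e^{id(p−s)}·e^{u_0·t·e^{id}} converges for every t > 0; (ii) the integral ∫_0^∞ f(t)·e^{−ξ·t·e^{id}}·dt/t converges absolutely (this is the analytic Laplace transform in direction d, with z = t·e^{id}); and (iii) its value equals Σ_{p≥0} a_p·Γ(p−s)·(ξ−u_0)^{s−p}, where (ξ−u_0)^{s−p} := exp((s−p)·(log|ξ−u_0| + iθ)) and θ is the unique real number with ξ−u_0 = |ξ−u_0|·e^{iθ} and θ + d ∈ (−π/2, π/2). -/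
/-!
Put `β = (ξ - u₀)·e^{id}`. Termwise, `f(t)·e^{-ξte^{id}}/t = Σ_p a_p e^{id(p-s)} t^{p-s-1} e^{-βt}`,
and for `Re β > 0` one has `∫₀^∞ t^{z-1} e^{-βt} dt = Γ(z) β^{-z}` (analytic continuation from
real `β`). Since `Γ(p - Re s) / |Γ(p - s)|` is nonincreasing in `p`, the integrals of the absolute
values of the terms are dominated by `Σ_p |a_p Γ(p-s)| (1/Re β)^p`, which is finite because
`1/Re β < r`; so the series may be integrated termwise. The same comparison bounds
`|a_p| ρ^p Γ(p - Re s)` for `ρ < r`, and `Σ_p x^p / Γ(p - Re s)` converges for every `x`, so `f(t)`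
converges for all `t > 0`. Finally, the condition on `θ` says `log β = log|ξ - u₀| + i(θ + d)`,
which turns `e^{id(p-s)} β^{s-p}` into `(ξ - u₀)^{s-p}`.
-/

noncomputable section

open MeasureTheory

/-- The series `f(t) = Σ_p a_p·t^{p−s}·e^{id(p−s)}·e^{u_0·t·e^{id}}`, i.e. the
function `f(z)` on the ray `z = t·e^{id}`, `t > 0`. -/
def laplaceSeries (u0 : ℂ) (d : ℝ) (s : ℂ) (a : ℕ → ℂ) (t : ℝ) : ℂ :=
  ∑' p : ℕ,
    a p * (t : ℂ) ^ ((p : ℂ) - s) * Complex.exp (Complex.I * (d : ℂ) * ((p : ℂ) - s)) *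
      Complex.exp (u0 * (t : ℂ) * Complex.exp ((d : ℂ) * Complex.I))

/-- The integrand `f(z)·e^{−ξz}·(dz/z)` of the analytic Laplace transform in
direction `d`, in the variable `t` with `z = t·e^{id}` (note `dz/z = dt/t`). -/
def laplaceIntegrand (u0 : ℂ) (d : ℝ) (s : ℂ) (a : ℕ → ℂ) (ξ : ℂ) (t : ℝ) : ℂ :=
  laplaceSeries u0 d s a t *
    Complex.exp (-(ξ * (t : ℂ) * Complex.exp ((d : ℂ) * Complex.I))) / (t : ℂ)

open Set Filter Complex Topology

lemma MeasureTheory.integrable_tsum_of_summable_integral_norm {α ι E : Type*}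
    [MeasurableSpace α] {μ : Measure α} [Countable ι] [NormedAddCommGroup E] [CompleteSpace E]
    {F : ι → α → E} (hF_int : ∀ i, Integrable (F i) μ)
    (hF_sum : Summable fun i => ∫ a, ‖F i a‖ ∂μ) :
    Integrable (fun a => ∑' i, F i a) μ := by
  refine ⟨.tsum fun i => (hF_int i).1, ?_⟩
  calc ∫⁻ a, ‖∑' i, F i a‖ₑ ∂μ ≤ ∫⁻ a, ∑' i, ‖F i a‖ₑ ∂μ :=
        lintegral_mono fun a => enorm_tsum_le_tsum_enorm
    _ = ∑' i, ENNReal.ofReal (∫ a, ‖F i a‖ ∂μ) := by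
        rw [lintegral_tsum fun i => (hF_int i).1.enorm]
        simp_rw [ofReal_integral_norm_eq_lintegral_enorm (hF_int _)]
    _ = ENNReal.ofReal (∑' i, ∫ a, ‖F i a‖ ∂μ) :=
        (ENNReal.ofReal_tsum_of_nonneg (fun i => integral_nonneg fun a => norm_nonneg _)
          hF_sum).symm
    _ < ⊤ := ENNReal.ofReal_lt_top

lemma Complex.Gamma_re_add_nat_mul_norm_Gamma_le {z : ℂ} (hz : 0 < z.re) (n : ℕ) :
    Real.Gamma (z.re + n) * ‖Gamma z‖ ≤ Real.Gamma z.re * ‖Gamma (z + n)‖ := by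
  induction n with
  | zero => simp [mul_comm]
  | succ n ih =>
    have hpos : 0 < z.re + n := by positivity
    have hne : z + n ≠ 0 := fun h => by simpa using hpos.trans_eq (congrArg re h)
    have hre : z.re + n ≤ ‖z + n‖ := by simpa using re_le_norm (z + n)
    push_cast
    rw [← add_assoc, ← add_assoc, Real.Gamma_add_one hpos.ne', Gamma_add_one _ hne,
      norm_mul, mul_assoc, mul_left_comm (Real.Gamma z.re)]
    gcongr

lemma summable_pow_div_Gamma_add {c : ℝ} (hc : 0 < c) (x : ℝ) :
    Summable fun n : ℕ => x ^ n / Real.Gamma (n + c) := by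
  refine summable_of_ratio_norm_eventually_le one_half_lt_one ?_
  filter_upwards [eventually_ge_atTop ⌈2 * |x|⌉₊] with n hn
  have hn' : 2 * |x| ≤ n := Nat.ceil_le.mp hn
  have hpos : 0 < n + c := by positivity
  have hstep : x ^ (n + 1) / Real.Gamma ((n + 1 : ℕ) + c) =
      x / (n + c) * (x ^ n / Real.Gamma (n + c)) := by
    rw [Nat.cast_succ, add_right_comm, Real.Gamma_add_one hpos.ne', pow_succ]
    field_simp
  rw [hstep, norm_mul]
  gcongr
  rw [norm_div, Real.norm_of_nonneg hpos.le, div_le_iff₀ hpos, Real.norm_eq_abs]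
  linarith

lemma norm_cpow_mul_exp_neg_mul {t : ℝ} (ht : 0 < t) (z β : ℂ) :
    ‖(t : ℂ) ^ (z - 1) * exp (-(β * t))‖ = t ^ (z.re - 1) * Real.exp (-(β.re * t)) := by
  rw [norm_mul, norm_cpow_eq_rpow_re_of_pos ht, norm_exp]
  simp

lemma integrableOn_cpow_mul_exp_neg_mul {z β : ℂ} (hz : 0 < z.re) (hβ : 0 < β.re) :
    IntegrableOn (fun t : ℝ => (t : ℂ) ^ (z - 1) * exp (-(β * t))) (Ioi 0) := by
  refine (integrable_norm_iff (by fun_prop)).mp ?_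
  refine IntegrableOn.congr_fun ?_ (fun t ht => (norm_cpow_mul_exp_neg_mul ht z β).symm)
    measurableSet_Ioi
  simpa using integrableOn_rpow_mul_exp_neg_mul_rpow (by linarith : -1 < z.re - 1) one_pos hβ

lemma integral_norm_cpow_mul_exp_neg_mul {z β : ℂ} (hz : 0 < z.re) (hβ : 0 < β.re) :
    ∫ t in Ioi (0 : ℝ), ‖(t : ℂ) ^ (z - 1) * exp (-(β * t))‖ =
      (1 / β.re) ^ z.re * Real.Gamma z.re := by
  rw [setIntegral_congr_fun measurableSet_Ioi (fun t ht => norm_cpow_mul_exp_neg_mul ht z β),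
    Real.integral_rpow_mul_exp_neg_mul_Ioi hz hβ]

lemma differentiableOn_integral_cpow_mul_exp_neg_mul {z : ℂ} (hz : 0 < z.re) :
    DifferentiableOn ℂ (fun β : ℂ => ∫ t in Ioi (0 : ℝ), (t : ℂ) ^ (z - 1) * exp (-(β * t)))
      {β | 0 < β.re} := by
  intro β₀ (hβ₀ : 0 < β₀.re)
  refine DifferentiableAt.differentiableWithinAt ?_
  set ε := β₀.re / 2 with hε_def
  have hε : 0 < ε := half_pos hβ₀
  have hball : ∀ β ∈ Metric.ball β₀ ε, ε ≤ β.re := fun β hβ => by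
    have := (abs_re_le_norm (β - β₀)).trans_lt (mem_ball_iff_norm.mp hβ)
    rw [sub_re, abs_lt] at this
    linarith
  have hbound : ∀ t ∈ Ioi (0 : ℝ), ∀ β ∈ Metric.ball β₀ ε,
      ‖(t : ℂ) ^ (z - 1) * exp (-(β * t)) * -(t : ℂ)‖ ≤ t ^ z.re * Real.exp (-(ε * t)) := by
    intro t (ht : 0 < t) β hβ
    rw [norm_mul, norm_cpow_mul_exp_neg_mul ht, norm_neg, norm_real, Real.norm_of_nonneg ht.le,
      mul_right_comm, ← Real.rpow_add_one ht.ne', sub_add_cancel]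
    gcongr
    nlinarith [hball β hβ]
  have hderiv : ∀ t : ℝ, ∀ β : ℂ, HasDerivAt (fun β : ℂ => (t : ℂ) ^ (z - 1) * exp (-(β * t)))
      ((t : ℂ) ^ (z - 1) * exp (-(β * t)) * -(t : ℂ)) β := fun t β => by
    simpa [mul_assoc] using
      (((hasDerivAt_id β).mul_const (t : ℂ)).neg.cexp).const_mul ((t : ℂ) ^ (z - 1))
  refine (hasDerivAt_integral_of_dominated_loc_of_deriv_le (Metric.ball_mem_nhds β₀ hε)
    (Eventually.of_forall fun β => by fun_prop)
    (integrableOn_cpow_mul_exp_neg_mul hz hβ₀).integrable (by fun_prop) ((ae_restrict_iff' measurableSet_Ioi).mpr (Eventually.of_forall hbound))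
    ?_ (Eventually.of_forall fun t β _ => hderiv t β)).2.differentiableAt
  simpa using
    (integrableOn_rpow_mul_exp_neg_mul_rpow (by linarith : -1 < z.re) one_pos hε).integrable

lemma integral_cpow_mul_exp_neg_mul_Ioi_of_re_pos {z β : ℂ} (hz : 0 < z.re) (hβ : 0 < β.re) :
    ∫ t in Ioi (0 : ℝ), (t : ℂ) ^ (z - 1) * exp (-(β * t)) = Gamma z * β ^ (-z) := by
  set U : Set ℂ := {w | 0 < w.re}
  have hU : IsOpen U := isOpen_lt continuous_const continuous_re
  have hGamma : DifferentiableOn ℂ (fun w : ℂ => Gamma z * w ^ (-z)) U := fun w (hw : 0 < w.re) =>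
    ((differentiableAt_id.cpow (differentiableAt_const _) (Or.inl hw)).const_mul _)
      |>.differentiableWithinAt
  have hreal : ∀ x : ℝ, 0 < x →
      ∫ t in Ioi (0 : ℝ), (t : ℂ) ^ (z - 1) * exp (-(x * t)) = Gamma z * (x : ℂ) ^ (-z) := by
    intro x hx
    rw [integral_cpow_mul_exp_neg_mul_Ioi hz hx, mul_comm, one_div,
      inv_cpow _ _ (by rw [arg_ofReal_of_nonneg hx.le]; exact Real.pi_ne_zero.symm), cpow_neg]
  -- identity theorem: both sides are holomorphic on `U` and agree on the positive reals near `1`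
  have hfreq : ∃ᶠ w in 𝓝[≠] (1 : ℂ), ∫ t in Ioi (0 : ℝ), (t : ℂ) ^ (z - 1) * exp (-(w * t)) =
      Gamma z * w ^ (-z) := by
    have hmap : Tendsto ((↑) : ℝ → ℂ) (𝓝[≠] 1) (𝓝[≠] 1) :=
      continuous_ofReal.continuousWithinAt.tendsto_nhdsWithin fun x hx => by simpa using hx
    refine hmap.frequently (Eventually.frequently ?_)
    filter_upwards [nhdsWithin_le_nhds (lt_mem_nhds one_pos)] with x hx using hreal x hx
  exact ((differentiableOn_integral_cpow_mul_exp_neg_mul hz).analyticOnNhd hU)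
    |>.eqOn_of_preconnected_of_frequently_eq (hGamma.analyticOnNhd hU)
      (convex_halfSpace_re_gt 0).isPreconnected (by simp) hfreq hβ

lemma Complex.log_mul_exp_mul_I {v : ℂ} (hv : v ≠ 0) {θ d : ℝ}
    (hθ : v = ‖v‖ * exp (θ * I)) (hθd : θ + d ∈ Ioc (-Real.pi) Real.pi) :
    log (v * exp (d * I)) = Real.log ‖v‖ + (θ + d : ℝ) * I := by
  have hpolar : v * exp (d * I) = exp (Real.log ‖v‖ + (θ + d : ℝ) * I) := by
    conv_lhs => rw [hθ, ← Real.exp_log (norm_pos_iff.mpr hv)]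
    rw [ofReal_exp, mul_assoc, ← exp_add, ← exp_add]
    push_cast
    ring_nf
  rw [hpolar, log_exp] <;> simp [hθd.1, hθd.2]

lemma norm_exp_I_mul_mul_natCast_sub (d : ℝ) (p : ℕ) (s : ℂ) :
    ‖exp (I * d * ((p : ℂ) - s))‖ = Real.exp (d * s.im) := by
  rw [norm_exp]
  simp

section Majorant

variable {s : ℂ} {a : ℕ → ℂ} {r : ℝ}

lemma re_natCast_sub_pos (hs : s.re < 0) (p : ℕ) : 0 < ((p : ℂ) - s).re := by
  simp only [sub_re, natCast_re]
  linarith [p.cast_nonneg (α := ℝ)]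

lemma Real.Gamma_natCast_sub_re_pos (hs : s.re < 0) (p : ℕ) : 0 < Real.Gamma (p - s.re) :=
  Real.Gamma_pos_of_pos (by simpa using re_natCast_sub_pos hs p)

lemma summable_norm_mul_Gamma_re_mul_pow (hs : s.re < 0)
    (hconv : ∀ w : ℂ, ‖w‖ < r → Summable fun p : ℕ => a p * Gamma ((p : ℂ) - s) * w ^ p)
    {x : ℝ} (hx : 0 ≤ x) (hxr : x < r) :
    Summable fun p : ℕ => ‖a p‖ * Real.Gamma (p - s.re) * x ^ p := by
  have habs : Summable fun p : ℕ => ‖a p * Gamma ((p : ℂ) - s) * (x : ℂ) ^ p‖ :=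
    summable_norm_iff.mpr (hconv x (by rwa [norm_real, Real.norm_of_nonneg hx]))
  have hΓ : 0 < ‖Gamma (-s)‖ := norm_pos_iff.mpr (Gamma_ne_zero_of_re_pos (by simpa using hs))
  refine (habs.mul_left (Real.Gamma (-s.re) / ‖Gamma (-s)‖)).of_nonneg_of_le
    (fun p => by have := Real.Gamma_natCast_sub_re_pos hs p; positivity) fun p => ?_
  have hcmp := Gamma_re_add_nat_mul_norm_Gamma_le (z := -s) (by simpa using hs) p
  rw [neg_re, neg_add_eq_sub, neg_add_eq_sub, ← le_div_iff₀ hΓ, mul_div_right_comm] at hcmp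
  rw [norm_mul, norm_mul, norm_pow, norm_real, Real.norm_of_nonneg hx]
  calc ‖a p‖ * Real.Gamma (p - s.re) * x ^ p
      ≤ ‖a p‖ * (Real.Gamma (-s.re) / ‖Gamma (-s)‖ * ‖Gamma ((p : ℂ) - s)‖) * x ^ p := by
        gcongr
    _ = _ := by ring

lemma summable_norm_mul_pow_of_summable_mul_Gamma (hs : s.re < 0) (hr : 0 < r)
    (hconv : ∀ w : ℂ, ‖w‖ < r → Summable fun p : ℕ => a p * Gamma ((p : ℂ) - s) * w ^ p)
    {x : ℝ} (hx : 0 ≤ x) :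
    Summable fun p : ℕ => ‖a p‖ * x ^ p := by
  obtain ⟨ρ, hρ, hρr⟩ : ∃ ρ, 0 < ρ ∧ ρ < r := ⟨r / 2, half_pos hr, half_lt_self hr⟩
  have hmaj := summable_norm_mul_Gamma_re_mul_pow hs hconv hρ.le hρr
  set C := ∑' p : ℕ, ‖a p‖ * Real.Gamma (p - s.re) * ρ ^ p
  refine ((summable_pow_div_Gamma_add (neg_pos.mpr hs) (x / ρ)).mul_left C).of_nonneg_of_le
    (fun p => by positivity) fun p => ?_
  have hΓ := Real.Gamma_natCast_sub_re_pos hs p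
  have hle : ‖a p‖ * Real.Gamma (p - s.re) * ρ ^ p ≤ C :=
    hmaj.le_tsum p fun q _ => by have := Real.Gamma_natCast_sub_re_pos hs q; positivity
  calc ‖a p‖ * x ^ p
      = ‖a p‖ * Real.Gamma (p - s.re) * ρ ^ p * ((x / ρ) ^ p / Real.Gamma (p - s.re)) := by
        rw [div_pow]
        field_simp
    _ ≤ C * ((x / ρ) ^ p / Real.Gamma (p + -s.re)) := by
        rw [← sub_eq_add_neg]
        gcongr

lemma summable_laplaceSeries_summand (hs : s.re < 0) (hr : 0 < r)
    (hconv : ∀ w : ℂ, ‖w‖ < r → Summable fun p : ℕ => a p * Gamma ((p : ℂ) - s) * w ^ p)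
    (u0 : ℂ) (d : ℝ) {t : ℝ} (ht : 0 < t) :
    Summable fun p : ℕ =>
      a p * (t : ℂ) ^ ((p : ℂ) - s) * exp (I * d * ((p : ℂ) - s)) * exp (u0 * t * exp (d * I)) := by
  refine Summable.of_norm ?_
  refine ((summable_norm_mul_pow_of_summable_mul_Gamma hs hr hconv ht.le).mul_right
    (t ^ (-s.re) * Real.exp (d * s.im) * ‖exp (u0 * t * exp (d * I))‖)).congr fun p => ?_
  rw [norm_mul, norm_mul, norm_mul, norm_cpow_eq_rpow_re_of_pos ht, norm_exp_I_mul_mul_natCast_sub,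
    sub_re, natCast_re, sub_eq_add_neg, Real.rpow_add ht, Real.rpow_natCast]
  ring

end Majorant

def laplaceIntegrandTerm (u0 : ℂ) (d : ℝ) (s : ℂ) (a : ℕ → ℂ) (ξ : ℂ) (p : ℕ) (t : ℝ) : ℂ :=
  a p * exp (I * d * ((p : ℂ) - s)) *
    ((t : ℂ) ^ ((p : ℂ) - s - 1) * exp (-((ξ - u0) * exp (d * I) * t)))

section LaplaceIntegrandTerm

variable {u0 : ℂ} {d : ℝ} {s : ℂ} {a : ℕ → ℂ} {ξ : ℂ}

lemma laplaceIntegrand_eq_tsum {t : ℝ} (ht : 0 < t) :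
    laplaceIntegrand u0 d s a ξ t = ∑' p, laplaceIntegrandTerm u0 d s a ξ p t := by
  rw [laplaceIntegrand, laplaceSeries, ← tsum_mul_right, ← tsum_div_const]
  refine tsum_congr fun p => ?_
  rw [laplaceIntegrandTerm, cpow_sub ((p : ℂ) - s) 1 (ofReal_ne_zero.mpr ht.ne'), cpow_one,
    show -((ξ - u0) * exp (d * I) * t) = u0 * t * exp (d * I) + -(ξ * t * exp (d * I)) by ring,
    exp_add]
  ring

lemma integrable_laplaceIntegrandTerm (hs : s.re < 0) (hβ : 0 < ((ξ - u0) * exp (d * I)).re)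
    (p : ℕ) : IntegrableOn (laplaceIntegrandTerm u0 d s a ξ p) (Ioi 0) :=
  (integrableOn_cpow_mul_exp_neg_mul (re_natCast_sub_pos hs p) hβ).const_mul _

lemma integral_norm_laplaceIntegrandTerm (hs : s.re < 0)
    (hβ : 0 < ((ξ - u0) * exp (d * I)).re) (p : ℕ) :
    ∫ t in Ioi (0 : ℝ), ‖laplaceIntegrandTerm u0 d s a ξ p t‖ =
      Real.exp (d * s.im) * (1 / ((ξ - u0) * exp (d * I)).re) ^ (-s.re) *
        (‖a p‖ * Real.Gamma (p - s.re) * (1 / ((ξ - u0) * exp (d * I)).re) ^ p) := by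
  simp_rw [laplaceIntegrandTerm, norm_mul (a p * _), integral_const_mul,
    integral_norm_cpow_mul_exp_neg_mul (re_natCast_sub_pos hs p) hβ, norm_mul,
    norm_exp_I_mul_mul_natCast_sub, sub_re, natCast_re, sub_eq_add_neg (p : ℝ),
    Real.rpow_add (one_div_pos.mpr hβ), Real.rpow_natCast]
  ring

lemma summable_integral_norm_laplaceIntegrandTerm {r : ℝ} (hs : s.re < 0) (hr : 0 < r)
    (hconv : ∀ w : ℂ, ‖w‖ < r → Summable fun p : ℕ => a p * Gamma ((p : ℂ) - s) * w ^ p)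
    (hξ : 1 / r < ((ξ - u0) * exp (d * I)).re) :
    Summable fun p => ∫ t in Ioi (0 : ℝ), ‖laplaceIntegrandTerm u0 d s a ξ p t‖ := by
  have hβ : 0 < ((ξ - u0) * exp (d * I)).re := (one_div_pos.mpr hr).trans hξ
  simp_rw [integral_norm_laplaceIntegrandTerm hs hβ]
  refine (summable_norm_mul_Gamma_re_mul_pow hs hconv (one_div_pos.mpr hβ).le ?_).mul_left _
  rwa [one_div_lt hβ hr]

lemma integral_laplaceIntegrandTerm (hs : s.re < 0) (hβ : 0 < ((ξ - u0) * exp (d * I)).re)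
    {θ : ℝ} (hθ : ξ - u0 = ‖ξ - u0‖ * exp (θ * I))
    (hθd : θ + d ∈ Ioc (-Real.pi) Real.pi) (p : ℕ) :
    ∫ t in Ioi (0 : ℝ), laplaceIntegrandTerm u0 d s a ξ p t =
      a p * Gamma ((p : ℂ) - s) * exp ((s - p) * (Real.log ‖ξ - u0‖ + θ * I)) := by
  have hβ0 : (ξ - u0) * exp (d * I) ≠ 0 := fun h => by simp [h] at hβ
  have hexp : exp (I * d * ((p : ℂ) - s)) *
      exp ((Real.log ‖ξ - u0‖ + (θ + d : ℝ) * I) * -((p : ℂ) - s)) =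
      exp ((s - p) * (Real.log ‖ξ - u0‖ + θ * I)) := by
    rw [← exp_add]
    push_cast
    ring_nf
  unfold laplaceIntegrandTerm
  rw [integral_const_mul, integral_cpow_mul_exp_neg_mul_Ioi_of_re_pos (re_natCast_sub_pos hs p) hβ,
    cpow_def_of_ne_zero hβ0, log_mul_exp_mul_I (left_ne_zero_of_mul hβ0) hθ hθd, ← hexp]
  ring

end LaplaceIntegrandTerm

/-- **Lemma 2.10.** If `Re s < 0` and the series
`Σ_p a_p·Γ(p−s)·w^p` has radius of convergence `≥ r`, then for every `ξ` with
`Re((ξ−u_0)e^{id}) > 1/r` the series defining `f` converges for all `t > 0`,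
the analytic Laplace transform converges absolutely, and its value equals the
formal Laplace transform `Σ_p a_p·Γ(p−s)·(ξ−u_0)^{s−p}` with the arguments
chosen so that `θ + d ∈ (−π/2, π/2)`. -/
theorem analytic_laplace_eq_formal_laplace
    (u0 : ℂ) (d : ℝ) (s : ℂ) (hs : s.re < 0) (a : ℕ → ℂ) (r : ℝ) (hr : 0 < r)
    (hconv : ∀ w : ℂ, ‖w‖ < r →
      Summable fun p : ℕ => a p * Complex.Gamma ((p : ℂ) - s) * w ^ p)
    (ξ : ℂ)
    (hξ : 1 / r < ((ξ - u0) * Complex.exp ((d : ℂ) * Complex.I)).re) :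
    (∀ t : ℝ, 0 < t →
      Summable fun p : ℕ =>
        a p * (t : ℂ) ^ ((p : ℂ) - s) * Complex.exp (Complex.I * (d : ℂ) * ((p : ℂ) - s)) *
          Complex.exp (u0 * (t : ℂ) * Complex.exp ((d : ℂ) * Complex.I))) ∧
    IntegrableOn (laplaceIntegrand u0 d s a ξ) (Set.Ioi (0 : ℝ)) ∧
    ∀ θ : ℝ,
      ξ - u0 = (‖ξ - u0‖ : ℂ) * Complex.exp ((θ : ℂ) * Complex.I) →
      θ + d ∈ Set.Ioo (-(Real.pi / 2)) (Real.pi / 2) →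
      ∫ t in Set.Ioi (0 : ℝ), laplaceIntegrand u0 d s a ξ t
        = ∑' p : ℕ,
            a p * Complex.Gamma ((p : ℂ) - s) *
              Complex.exp ((s - (p : ℂ)) *
                (((Real.log ‖ξ - u0‖ : ℝ) : ℂ) + (θ : ℂ) * Complex.I)) := by
  have hβ : 0 < ((ξ - u0) * exp (d * I)).re := (one_div_pos.mpr hr).trans hξ
  have hint := integrable_laplaceIntegrandTerm (a := a) hs hβ
  have hsum := summable_integral_norm_laplaceIntegrandTerm hs hr hconv hξ
  have heq : laplaceIntegrand u0 d s a ξ =ᵐ[volume.restrict (Ioi 0)]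
      fun t => ∑' p, laplaceIntegrandTerm u0 d s a ξ p t :=
    (ae_restrict_iff' measurableSet_Ioi).mpr (.of_forall fun t => laplaceIntegrand_eq_tsum)
  refine ⟨fun t => summable_laplaceSeries_summand hs hr hconv u0 d,
    (integrable_tsum_of_summable_integral_norm hint hsum).congr heq.symm, fun θ hθ hθd => ?_⟩
  have hθd' : θ + d ∈ Ioc (-Real.pi) Real.pi := by
    constructor <;> linarith [hθd.1, hθd.2, Real.pi_pos]
  rw [integral_congr_ae heq, ← integral_tsum_of_summable_integral_norm hint hsum]
  exact tsum_congr (integral_laplaceIntegrandTerm hs hβ hθ hθd')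
end
end

section
/- Darboux's method along a ray (second part of the Darboux lemma, Lemma \ref{Lem:AnaLim}): let α ≥ 1 be a real number, β, C ∈ ℂ, and let v_s ≠ v_t be complex numbers; let θ ∈ ℝ be such that v_s − v_t = |v_s − v_t|·e^{iθ}, and for z ∈ ℂ write (v_s−v_t)^z := exp(z·(log|v_s−v_t| + iθ)). Let (c_p)_{p≥0} be complex numbers such that p^{1−α}·(v_s−v_t)^{−p−β}·c_p → C·(v_s−v_t)^{−α} as p → ∞. Then for every x > 1 the series f(x) := Σ_{p≥0} c_p·x^{−p−β}·(v_s−v_t)^{−p−β} converges absolutely (f(x) is the value of the series Σ_p c_p·(ξ−v_t)^{−p−β} at the point ξ = v_t + x·(v_s−v_t) of the open ray starting at v_s in direction e^{iθ}, with the argument of ξ−v_t taken equal to θ), and (x−1)^α·(v_s−v_t)^α·f(x) → C·Γ(α) as x → 1⁺; equivalently, Σ_p c_p·(ξ−v_t)^{−p−β} = C·Γ(α)·(ξ−v_s)^{−α} + o(|ξ−v_s|^{−α}) as ξ → v_s along the ray [v_s, ∞·e^{iθ}), with the argument of ξ−v_s taken equal to θ. -/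
/-!
Let `n^{1-α} aₙ → L` and put `h = x - 1`. Apart from its `p = 0` term, `h^α ∑ₚ aₚ x^{-p}` is the
integral over `(0, ∞)` of the step function equal to `x^{-n} (h n)^{α-1} · n^{1-α} aₙ` on
`((n - 1) h, n h]`. For fixed `u > 0` and `n = ⌈u / h⌉`, as `x → 1⁺` we have `h n → u`,
`x^n → e^u` and `n^{1-α} aₙ → L`, so the step function tends to `e^{-u} u^{α-1} L`. For `α ≥ 1`
and `x ≤ 2` it is dominated by a multiple of `(u + 1)^{α-1} e^{-u/2}`, and dominated convergence
gives the limit `Γ(α) L`; the integral representation also gives the convergence of the series.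
In the theorem `aₚ = (v_s - v_t)^{-p-β} cₚ`, and the remaining factor `x^{-β}` tends to `1`.
-/

noncomputable section

open Filter MeasureTheory Set
open scoped Topology

/-- The power `(v_s − v_t)^z := exp(z·(log|v_s − v_t| + iθ))` with prescribed
argument `θ`. -/
def cpowArg (w : ℂ) (θ : ℝ) (z : ℂ) : ℂ :=
  Complex.exp (z * (((Real.log ‖w‖ : ℝ) : ℂ) + (θ : ℂ) * Complex.I))

theorem cpowArg_neg_mul_cancel (w : ℂ) (θ : ℝ) (z : ℂ) :
    cpowArg w θ (-z) * cpowArg w θ z = 1 := by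
  rw [cpowArg, cpowArg, ← Complex.exp_add, neg_mul, neg_add_cancel, Complex.exp_zero]

theorem cpow_neg_natCast_sub {z : ℂ} (hz : z ≠ 0) (p : ℕ) (β : ℂ) :
    z ^ (-(p : ℂ) - β) = (z ^ p)⁻¹ * z ^ (-β) := by
  rw [sub_eq_add_neg, Complex.cpow_add _ _ hz, Complex.cpow_neg, Complex.cpow_natCast]

theorem natCeil_div_eq_add_one_iff {h u : ℝ} (hh : 0 < h) (p : ℕ) :
    ⌈u / h⌉₊ = p + 1 ↔ u ∈ Ioc (p * h) ((p + 1) * h) := by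
  rw [Nat.ceil_eq_iff p.succ_ne_zero, Nat.succ_sub_one, lt_div_iff₀ hh, div_le_iff₀ hh]
  push_cast
  rfl

theorem hasSum_setIntegral_Ioi_comp_natCeil_div {E : Type*} [NormedAddCommGroup E]
    [NormedSpace ℝ E] [CompleteSpace E] (f : ℕ → E) {h : ℝ} (hh : 0 < h)
    (hf : IntegrableOn (fun u => f ⌈u / h⌉₊) (Ioi 0)) :
    HasSum (fun p : ℕ => h • f (p + 1)) (∫ u in Ioi 0, f ⌈u / h⌉₊) := by
  have hunion : (⋃ p : ℕ, Ioc (p * h) ((p + 1) * h)) = Ioi 0 := by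
    ext u
    simp only [mem_iUnion, ← natCeil_div_eq_add_one_iff hh, mem_Ioi]
    rw [← div_pos_iff_of_pos_right hh, ← Nat.ceil_pos]
    exact ⟨fun ⟨p, hp⟩ => hp ▸ p.succ_pos, fun hpos => ⟨_, (Nat.succ_pred_eq_of_pos hpos).symm⟩⟩
  have hdisj : Pairwise (Function.onFun Disjoint fun p : ℕ => Ioc (p * h) ((p + 1) * h)) := by
    refine fun i j hij => Set.disjoint_left.mpr fun u hi hj => hij ?_
    rw [← natCeil_div_eq_add_one_iff hh] at hi hj
    omega
  have hpiece (p : ℕ) : ∫ u in Ioc (p * h) ((p + 1) * h), f ⌈u / h⌉₊ = h • f (p + 1) := by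
    rw [setIntegral_congr_fun measurableSet_Ioc
        (fun u hu => congrArg f ((natCeil_div_eq_add_one_iff hh p).mpr hu)),
      setIntegral_const, Real.volume_real_Ioc_of_le (by nlinarith)]
    ring_nf
  rw [← hunion] at hf ⊢
  simpa only [hpiece] using hasSum_integral_iUnion (fun _ => measurableSet_Ioc) hdisj hf

theorem integrableOn_add_rpow_mul_exp_neg_mul {s b c : ℝ} (hs : -1 < s) (hb : 0 < b)
    (hc : 0 ≤ c) :
    IntegrableOn (fun u : ℝ => (u + c) ^ s * Real.exp (-b * u)) (Ioi 0) := by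
  have hshift : IntegrableOn (fun u : ℝ => (u + c) ^ s * Real.exp (-b * (u + c))) (Ioi 0) := by
    have h := (integrableOn_rpow_mul_exp_neg_mul_rpow hs one_pos hb).mono_set
      (Ioi_subset_Ioi hc)
    rw [← (measurePreserving_add_right volume c).integrableOn_comp_preimage
      (measurableEmbedding_addRight c), preimage_add_const_Ioi, sub_self] at h
    simpa only [Function.comp_def, Real.rpow_one] using h
  refine IntegrableOn.congr_fun (hshift.const_mul (Real.exp (b * c))) (fun u _ => ?_)
    measurableSet_Ioi
  rw [mul_left_comm, ← Real.exp_add]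
  ring_nf

theorem le_mul_natCeil_div {h u : ℝ} (hh : 0 < h) : u ≤ h * ⌈u / h⌉₊ := by
  rw [← div_le_iff₀' hh]
  exact Nat.le_ceil _

theorem mul_natCeil_div_lt {h u : ℝ} (hh : 0 < h) (hu : 0 ≤ u) : h * ⌈u / h⌉₊ < u + h := by
  have := Nat.ceil_lt_add_one (div_nonneg hu hh.le)
  rwa [← mul_lt_mul_iff_of_pos_left hh, mul_add, mul_div_cancel₀ _ hh.ne', mul_one] at this

theorem tendsto_sub_one_nhdsGT : Tendsto (fun x : ℝ => x - 1) (𝓝[>] 1) (𝓝[>] 0) := by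
  have h := (continuous_sub_right (1 : ℝ)).continuousWithinAt (s := Ioi 1) (x := 1)
  refine tendsto_nhdsWithin_iff.mpr ⟨by simpa using h.tendsto, ?_⟩
  filter_upwards [self_mem_nhdsWithin] with x hx
  exact sub_pos.mpr (mem_Ioi.mp hx)

theorem tendsto_natCeil_div_sub_one_atTop {u : ℝ} (hu : 0 < u) :
    Tendsto (fun x : ℝ => ⌈u / (x - 1)⌉₊) (𝓝[>] 1) atTop := by
  have h : Tendsto (fun x : ℝ => u / (x - 1)) (𝓝[>] 1) atTop := by
    simpa only [div_eq_mul_inv, Function.comp_def] using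
      (tendsto_inv_nhdsGT_zero.comp tendsto_sub_one_nhdsGT).const_mul_atTop hu
  exact tendsto_nat_ceil_atTop.comp h

theorem tendsto_sub_one_mul_natCeil_div_sub_one {u : ℝ} (hu : 0 ≤ u) :
    Tendsto (fun x : ℝ => (x - 1) * ⌈u / (x - 1)⌉₊) (𝓝[>] 1) (𝓝 u) := by
  have hsub : Tendsto (fun x : ℝ => x - 1) (𝓝[>] 1) (𝓝 0) :=
    tendsto_sub_one_nhdsGT.mono_right nhdsWithin_le_nhds
  have hupper : Tendsto (fun x : ℝ => u + (x - 1)) (𝓝[>] 1) (𝓝 u) := by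
    simpa using hsub.const_add u
  refine tendsto_of_tendsto_of_tendsto_of_le_of_le' tendsto_const_nhds hupper ?_ ?_ <;>
    filter_upwards [self_mem_nhdsWithin] with x hx
  · exact le_mul_natCeil_div (sub_pos.mpr hx)
  · exact (mul_natCeil_div_lt (sub_pos.mpr hx) hu).le

theorem tendsto_log_div_sub_one : Tendsto (fun x : ℝ => Real.log x / (x - 1)) (𝓝[>] 1) (𝓝 1) := by
  have h := hasDerivAt_iff_tendsto_slope.mp (Real.hasDerivAt_log one_ne_zero)
  rw [inv_one] at h
  refine (h.mono_left (nhdsWithin_mono _ fun x hx => ne_of_gt hx)).congr fun x => ?_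
  rw [slope_def_field, Real.log_one, sub_zero]

theorem tendsto_pow_natCeil_div_sub_one {u : ℝ} (hu : 0 ≤ u) :
    Tendsto (fun x : ℝ => x ^ ⌈u / (x - 1)⌉₊) (𝓝[>] 1) (𝓝 (Real.exp u)) := by
  have hexp := (Real.continuous_exp.tendsto u).comp
    (by simpa using (tendsto_sub_one_mul_natCeil_div_sub_one hu).mul tendsto_log_div_sub_one)
  refine hexp.congr' ?_
  filter_upwards [self_mem_nhdsWithin] with x hx
  have hx1 : x - 1 ≠ 0 := (sub_pos.mpr (mem_Ioi.mp hx)).ne'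
  have harg : (x - 1) * ⌈u / (x - 1)⌉₊ * (Real.log x / (x - 1)) = ⌈u / (x - 1)⌉₊ * Real.log x := by
    field_simp
  rw [Function.comp_apply, harg, Real.exp_nat_mul, Real.exp_log (by linarith [mem_Ioi.mp hx])]

def darbouxStep (α : ℝ) (a : ℕ → ℂ) (x : ℝ) (n : ℕ) : ℂ :=
  (((x ^ n)⁻¹ * ((x - 1) * n) ^ (α - 1) : ℝ) : ℂ) * ((n : ℂ) ^ (1 - (α : ℂ)) * a n)

section Darboux

variable {α : ℝ} {a : ℕ → ℂ}

theorem sub_one_smul_darbouxStep {x : ℝ} (hx : 1 < x) {n : ℕ} (hn : n ≠ 0) :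
    (x - 1) • darbouxStep α a x n = ((x - 1 : ℝ) : ℂ) ^ (α : ℂ) * (a n / (x : ℂ) ^ n) := by
  have ht : 0 < x - 1 := sub_pos.mpr hx
  have hn' : (n : ℂ) ≠ 0 := Nat.cast_ne_zero.mpr hn
  have hcancel : (n : ℂ) ^ ((α : ℂ) - 1) * (n : ℂ) ^ (1 - (α : ℂ)) = 1 := by
    rw [← Complex.cpow_add _ _ hn', sub_add_sub_cancel', sub_self, Complex.cpow_zero]
  rw [darbouxStep, Complex.real_smul, Real.mul_rpow ht.le n.cast_nonneg,
    Real.rpow_sub_one ht.ne']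
  push_cast [Complex.ofReal_cpow ht.le, Complex.ofReal_cpow n.cast_nonneg]
  have hx0 : (x : ℂ) ≠ 0 := by exact_mod_cast (by linarith : x ≠ 0)
  have ht0 : (x : ℂ) - 1 ≠ 0 := by exact_mod_cast ht.ne'
  field_simp
  linear_combination (↑x - 1) ^ (α : ℂ) * a n * hcancel

theorem norm_darbouxStep_le {M : ℝ} (hα : 1 ≤ α)
    (hM : ∀ n : ℕ, ‖(n : ℂ) ^ (1 - (α : ℂ)) * a n‖ ≤ M) {x u : ℝ} (hx : 1 < x) (hu : 0 < u) :
    ‖darbouxStep α a x ⌈u / (x - 1)⌉₊‖ ≤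
      M * ((u + (x - 1)) ^ (α - 1) * Real.exp (-x⁻¹ * u)) := by
  set n := ⌈u / (x - 1)⌉₊
  have ht : 0 < x - 1 := sub_pos.mpr hx
  have hx0 : 0 < x := by linarith
  have hrpow : ((x - 1) * n) ^ (α - 1) ≤ (u + (x - 1)) ^ (α - 1) :=
    Real.rpow_le_rpow (by positivity) (mul_natCeil_div_lt ht hu.le).le (by linarith)
  have hexp : Real.exp (x⁻¹ * u) ≤ x ^ n := by
    calc Real.exp (x⁻¹ * u) ≤ Real.exp (n * Real.log x) := by
          refine Real.exp_le_exp.mpr ?_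
          calc x⁻¹ * u ≤ x⁻¹ * ((x - 1) * n) := by gcongr; exact le_mul_natCeil_div ht
            _ = n * (1 - x⁻¹) := by field_simp
            _ ≤ n * Real.log x := by gcongr; exact Real.one_sub_inv_le_log_of_pos hx0
      _ = x ^ n := by rw [Real.exp_nat_mul, Real.exp_log hx0]
  have hinv : (x ^ n)⁻¹ ≤ Real.exp (-x⁻¹ * u) := by
    rw [neg_mul, Real.exp_neg]
    exact inv_anti₀ (Real.exp_pos _) hexp
  have hM0 : 0 ≤ M := (norm_nonneg _).trans (hM 0)
  rw [darbouxStep, norm_mul, Complex.norm_real, Real.norm_of_nonneg (by positivity), mul_comm,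
    mul_comm ((u + (x - 1)) ^ (α - 1))]
  exact mul_le_mul (hM n) (mul_le_mul hinv hrpow (by positivity) (Real.exp_pos _).le)
    (by positivity) hM0

theorem integrableOn_darbouxStep {M : ℝ} (hα : 1 ≤ α)
    (hM : ∀ n : ℕ, ‖(n : ℂ) ^ (1 - (α : ℂ)) * a n‖ ≤ M) {x : ℝ} (hx : 1 < x) :
    IntegrableOn (fun u => darbouxStep α a x ⌈u / (x - 1)⌉₊) (Ioi 0) := by
  refine Integrable.mono' ((integrableOn_add_rpow_mul_exp_neg_mul (s := α - 1) (by linarith)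
    (inv_pos.mpr (by linarith)) (sub_pos.mpr hx).le).const_mul M) ?_ ?_
  · exact ((measurable_from_nat (f := darbouxStep α a x)).comp
      ((measurable_id (α := ℝ)).div_const _).nat_ceil).aestronglyMeasurable
  · exact (ae_restrict_iff' measurableSet_Ioi).mpr
      (ae_of_all _ fun u hu => norm_darbouxStep_le hα hM hx hu)

theorem hasSum_darbouxStep (hα : 1 ≤ α) {L : ℂ}
    (ha : Tendsto (fun n : ℕ => (n : ℂ) ^ (1 - (α : ℂ)) * a n) atTop (𝓝 L)) {x : ℝ} (hx : 1 < x) :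
    HasSum (fun p : ℕ => ((x - 1 : ℝ) : ℂ) ^ (α : ℂ) * (a (p + 1) / (x : ℂ) ^ (p + 1)))
      (∫ u in Ioi 0, darbouxStep α a x ⌈u / (x - 1)⌉₊) := by
  obtain ⟨M, hM⟩ := ha.norm.bddAbove_range
  simpa only [sub_one_smul_darbouxStep hx (Nat.succ_ne_zero _)] using
    hasSum_setIntegral_Ioi_comp_natCeil_div _ (sub_pos.mpr hx)
      (integrableOn_darbouxStep hα (fun n => hM ⟨n, rfl⟩) hx)

theorem tendsto_darbouxStep {L : ℂ}
    (ha : Tendsto (fun n : ℕ => (n : ℂ) ^ (1 - (α : ℂ)) * a n) atTop (𝓝 L)) {u : ℝ} (hu : 0 < u) :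
    Tendsto (fun x => darbouxStep α a x ⌈u / (x - 1)⌉₊) (𝓝[>] 1)
      (𝓝 (((Real.exp (-u) * u ^ (α - 1) : ℝ) : ℂ) * L)) := by
  have hreal := ((tendsto_pow_natCeil_div_sub_one hu.le).inv₀ (Real.exp_pos u).ne').mul
    ((Real.continuousAt_rpow_const _ (α - 1) (Or.inl hu.ne')).tendsto.comp
      (tendsto_sub_one_mul_natCeil_div_sub_one hu.le))
  rw [Real.exp_neg]
  exact ((Complex.continuous_ofReal.tendsto _).comp hreal).mul
    (ha.comp (tendsto_natCeil_div_sub_one_atTop hu))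

theorem tendsto_integral_darbouxStep (hα : 1 ≤ α) {L : ℂ}
    (ha : Tendsto (fun n : ℕ => (n : ℂ) ^ (1 - (α : ℂ)) * a n) atTop (𝓝 L)) :
    Tendsto (fun x => ∫ u in Ioi 0, darbouxStep α a x ⌈u / (x - 1)⌉₊) (𝓝[>] 1)
      (𝓝 (Complex.Gamma α * L)) := by
  obtain ⟨M, hM⟩ := ha.norm.bddAbove_range
  replace hM : ∀ n : ℕ, ‖(n : ℂ) ^ (1 - (α : ℂ)) * a n‖ ≤ M := fun n => hM ⟨n, rfl⟩
  have hGamma : ∫ u in Ioi 0, ((Real.exp (-u) * u ^ (α - 1) : ℝ) : ℂ) * L =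
      Complex.Gamma α * L := by
    rw [integral_mul_const, integral_complex_ofReal, ← Real.Gamma_eq_integral (by linarith),
      Complex.Gamma_ofReal]
  rw [← hGamma]
  refine tendsto_integral_filter_of_dominated_convergence
    (fun u => M * ((u + 1) ^ (α - 1) * Real.exp (-2⁻¹ * u))) ?_ ?_ ?_ ?_
  · filter_upwards [self_mem_nhdsWithin] with x hx
    exact (integrableOn_darbouxStep hα hM hx).aestronglyMeasurable
  · filter_upwards [Ioc_mem_nhdsGT one_lt_two] with x hx
    refine (ae_restrict_iff' measurableSet_Ioi).mpr (ae_of_all _ fun u hu => ?_)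
    refine (norm_darbouxStep_le hα hM hx.1 hu).trans ?_
    have hM0 : 0 ≤ M := (norm_nonneg _).trans (hM 0)
    have hu0 : 0 < u := hu
    gcongr <;> linarith [hx.1, hx.2]
  · exact (integrableOn_add_rpow_mul_exp_neg_mul (by linarith) (by norm_num)
      zero_le_one).const_mul M
  · exact (ae_restrict_iff' measurableSet_Ioi).mpr
      (ae_of_all _ fun u hu => tendsto_darbouxStep ha hu)

theorem summable_div_pow_of_tendsto (hα : 1 ≤ α) {L : ℂ}
    (ha : Tendsto (fun n : ℕ => (n : ℂ) ^ (1 - (α : ℂ)) * a n) atTop (𝓝 L)) {x : ℝ} (hx : 1 < x) :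
    Summable fun p : ℕ => a p / (x : ℂ) ^ p := by
  have hne : ((x - 1 : ℝ) : ℂ) ^ (α : ℂ) ≠ 0 := by
    rw [← Complex.ofReal_cpow (sub_pos.mpr hx).le]
    exact Complex.ofReal_ne_zero.mpr (Real.rpow_pos_of_pos (sub_pos.mpr hx) α).ne'
  exact (summable_nat_add_iff 1).mp <|
    (summable_mul_left_iff hne).mp (hasSum_darbouxStep hα ha hx).summable

theorem tendsto_sub_one_cpow_mul_tsum_div_pow (hα : 1 ≤ α) {L : ℂ}
    (ha : Tendsto (fun n : ℕ => (n : ℂ) ^ (1 - (α : ℂ)) * a n) atTop (𝓝 L)) :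
    Tendsto (fun x : ℝ => ((x - 1 : ℝ) : ℂ) ^ (α : ℂ) * ∑' p : ℕ, a p / (x : ℂ) ^ p) (𝓝[>] 1)
      (𝓝 (Complex.Gamma α * L)) := by
  have hsplit : ∀ x ∈ Ioi (1 : ℝ), ((x - 1 : ℝ) : ℂ) ^ (α : ℂ) * a 0 +
      ∫ u in Ioi 0, darbouxStep α a x ⌈u / (x - 1)⌉₊ =
      ((x - 1 : ℝ) : ℂ) ^ (α : ℂ) * ∑' p : ℕ, a p / (x : ℂ) ^ p := fun x hx => by
    rw [(summable_div_pow_of_tendsto hα ha hx).tsum_eq_zero_add, mul_add, pow_zero, div_one,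
      ← (hasSum_darbouxStep hα ha hx).tsum_eq, tsum_mul_left]
  have hpow : Tendsto (fun x : ℝ => ((x - 1 : ℝ) : ℂ) ^ (α : ℂ)) (𝓝[>] 1) (𝓝 0) := by
    have h := (Complex.continuousAt_ofReal_cpow_const 0 α
      (Or.inl (by simpa using zero_lt_one.trans_le hα))).tendsto.comp
      (tendsto_sub_one_nhdsGT.mono_right nhdsWithin_le_nhds)
    rwa [Complex.ofReal_zero, Complex.zero_cpow (Complex.ofReal_ne_zero.mpr (by linarith))] at h
  have h := (hpow.mul_const (a 0)).add (tendsto_integral_darbouxStep hα ha)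
  rw [zero_mul, zero_add] at h
  exact h.congr' (eventually_nhdsWithin_of_forall hsplit)

end Darboux

theorem darboux_ray_general
    (α : ℝ) (hα : 1 ≤ α) (β C : ℂ) (vs vt : ℂ)
    (θ : ℝ)
    (c : ℕ → ℂ)
    (hlim : Tendsto
      (fun p : ℕ =>
        (p : ℂ) ^ ((1 : ℂ) - (α : ℂ)) * cpowArg (vs - vt) θ (-(p : ℂ) - β) * c p)
      atTop (𝓝 (C * cpowArg (vs - vt) θ (-(α : ℂ))))) :
    (∀ x : ℝ, 1 < x →
      Summable fun p : ℕ =>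
        c p * (x : ℂ) ^ (-(p : ℂ) - β) * cpowArg (vs - vt) θ (-(p : ℂ) - β)) ∧
    Tendsto
      (fun x : ℝ =>
        ((x - 1 : ℝ) : ℂ) ^ (α : ℂ) * cpowArg (vs - vt) θ (α : ℂ) *
          ∑' p : ℕ, c p * (x : ℂ) ^ (-(p : ℂ) - β) * cpowArg (vs - vt) θ (-(p : ℂ) - β))
      (𝓝[Set.Ioi (1 : ℝ)] 1) (𝓝 (C * Complex.Gamma (α : ℂ))) := by
  set D := cpowArg (vs - vt) θ
  set a : ℕ → ℂ := fun p => D (-(p : ℂ) - β) * c p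
  have ha : Tendsto (fun p : ℕ => (p : ℂ) ^ (1 - (α : ℂ)) * a p) atTop (𝓝 (C * D (-α))) := by
    simpa only [a, mul_assoc] using hlim
  have hterm (x : ℝ) (hx : 1 < x) (p : ℕ) :
      c p * (x : ℂ) ^ (-(p : ℂ) - β) * D (-(p : ℂ) - β) = a p / (x : ℂ) ^ p * (x : ℂ) ^ (-β) := by
    rw [cpow_neg_natCast_sub (Complex.ofReal_ne_zero.mpr (by linarith))]
    ring
  refine ⟨fun x hx => ?_, ?_⟩
  · simpa only [hterm x hx] using (summable_div_pow_of_tendsto hα ha hx).mul_right _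
  · have hβ : Tendsto (fun x : ℝ => (x : ℂ) ^ (-β)) (𝓝[>] 1) (𝓝 1) := by
      simpa using (Complex.continuousAt_ofReal_cpow_const 1 (-β)
        (Or.inr one_ne_zero)).tendsto.mono_left nhdsWithin_le_nhds
    have h := ((tendsto_sub_one_cpow_mul_tsum_div_pow hα ha).mul hβ).const_mul (D α)
    rw [show D α * (Complex.Gamma α * (C * D (-α)) * 1) = C * Complex.Gamma α by
      linear_combination C * Complex.Gamma α * cpowArg_neg_mul_cancel (vs - vt) θ α] at h
    refine h.congr' (eventually_nhdsWithin_of_forall fun x hx => ?_)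
    simp only [hterm x hx, tsum_mul_right]
    ring

/-- **Darboux's method along a ray.** If
`p^{1−α}·(v_s−v_t)^{−p−β}·c_p → C·(v_s−v_t)^{−α}`, then for every `x > 1` the
series `f(x) = Σ_p c_p·x^{−p−β}·(v_s−v_t)^{−p−β}` converges absolutely, and
`(x−1)^α·(v_s−v_t)^α·f(x) → C·Γ(α)` as `x → 1⁺`. -/
theorem darboux_ray
    (α : ℝ) (hα : 1 ≤ α) (β C : ℂ) (vs vt : ℂ) (hvst : vs ≠ vt)
    (θ : ℝ)
    (hθ : vs - vt = ((‖vs - vt‖ : ℝ) : ℂ) * Complex.exp ((θ : ℂ) * Complex.I))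
    (c : ℕ → ℂ)
    (hlim : Tendsto
      (fun p : ℕ =>
        (p : ℂ) ^ ((1 : ℂ) - (α : ℂ)) * cpowArg (vs - vt) θ (-(p : ℂ) - β) * c p)
      atTop (𝓝 (C * cpowArg (vs - vt) θ (-(α : ℂ))))) :
    (∀ x : ℝ, 1 < x →
      Summable fun p : ℕ =>
        c p * (x : ℂ) ^ (-(p : ℂ) - β) * cpowArg (vs - vt) θ (-(p : ℂ) - β)) ∧
    Tendsto
      (fun x : ℝ =>
        ((x - 1 : ℝ) : ℂ) ^ (α : ℂ) * cpowArg (vs - vt) θ (α : ℂ) *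
          ∑' p : ℕ, c p * (x : ℂ) ^ (-(p : ℂ) - β) * cpowArg (vs - vt) θ (-(p : ℂ) - β))
      (𝓝[Set.Ioi (1 : ℝ)] 1) (𝓝 (C * Complex.Gamma (α : ℂ))) :=
  darboux_ray_general α hα β C vs vt θ c hlim

end
end
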